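/- Let n ≥ 1 be an integer and let ζ be a fixed primitive n-th root of unity in the cyclotomic field ℚ(ζ_n). For each prime p dividing n let k_p denote the p-adic valuation of n. Then the element η = Π_{p ∣ n} ( Σ_{j=0}^{k_p − 1} ζ^{(n / p^{k_p}) · p^j} ), the product over the distinct prime divisors p of n of the sums of the elements ζ^{(n/p^{k_p})·p^j} for 0 ≤ j ≤ k_p − 1, is a normal basis generator of ℚ(ζ_n)/ℚ; i.e., the family (σ(η)) indexed by σ ∈ Gal(ℚ(ζ_n)/ℚ) is a basis of ℚ(ζ_n) as a ℚ-vector space. -/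

import Mathlib

/-- `x` is a normal basis generator of a field `K` over `ℚ`:
the family `(σ x)` indexed by `σ ∈ Gal(K/ℚ)` is a `ℚ`-basis of `K`. -/
def IsNormalBasisGenerator (K : Type*) [Field K] [Algebra ℚ K] (x : K) : Prop :=
  ∃ B : Module.Basis (K ≃ₐ[ℚ] K) ℚ K, ∀ σ : K ≃ₐ[ℚ] K, B σ = σ x

/-!
Write `ζ_p = ζ ^ (n / p ^ k_p)`, a primitive `p ^ k_p`-th root of unity, so that `η = ∏ η_p` with
`η_p = ∑_{j < k_p} ζ_p ^ p ^ j`.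

For one prime power `p ^ k`, consider the tail sums `T_l ω = ∑_{l ≤ j < k} ω ^ p ^ j` over the
primitive `p ^ k`-th roots `ω`. Replacing `ω` by `ω ^ (1 + t p ^ (k - l - 1))` leaves every term
of `T_(l+1) ω` unchanged and multiplies `ω ^ p ^ l` by the `t`-th power of a primitive `p`-th root
of unity, so summing `T_l` over `t < p` gives `p • T_(l+1) ω`. Hence all tails lie in the
`ℚ`-span of the `T_0 ω`, and so do their differences `ω ^ (a p ^ l)` with `p ∤ a`, which together
with `1 = -∑_{0 < i < p ^ k} ω ^ i` exhaust the powers of `ω`.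

By the Chinese remainder theorem every product of conjugates of the factors `η_p` is a conjugate
of `η`, so the span of the conjugates of `η` contains the product of the spans of the
conjugates of the `η_p`, and with it every power of `ζ = ∏ ζ_p ^ c`. The `φ(n)` conjugates of
`η` therefore span `ℚ(ζ_n)`, which has dimension `φ(n)`.
-/

open Finset Submodule

lemma Nat.coprime_one_add_mul_pow {p e : ℕ} (he : e ≠ 0) (t k : ℕ) :
    (1 + t * p ^ e).Coprime (p ^ k) := by
  refine Nat.Coprime.pow_right _ (Nat.Coprime.coprime_dvd_right (dvd_pow_self p he) ?_)
  simp

lemma Nat.pairwise_coprime_ordProj (n : ℕ) :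
    Set.Pairwise n.primeFactors (Function.onFun Nat.Coprime fun p => ordProj[p] n) :=
  fun _ hp _ hq hpq => Nat.Coprime.pow _ _
    ((Nat.coprime_primes (Nat.prime_of_mem_primeFactors hp)
      (Nat.prime_of_mem_primeFactors hq)).2 hpq)

lemma Nat.coprime_sum_ordCompl {n : ℕ} (hn : n ≠ 0) :
    (∑ p ∈ n.primeFactors, ordCompl[p] n).Coprime n := by
  refine Nat.coprime_of_dvd fun q hq hqsum hqn => ?_
  have hqP : q ∈ n.primeFactors := Nat.mem_primeFactors.2 ⟨hq, hqn, hn⟩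
  have hrest : q ∣ ∑ p ∈ n.primeFactors.erase q, ordCompl[p] n :=
    dvd_sum fun p hp => Nat.dvd_ordCompl_of_dvd_not_dvd hqn fun hpq =>
      ne_of_mem_erase hp ((Nat.prime_dvd_prime_iff_eq (Nat.prime_of_mem_primeFactors
        (mem_of_mem_erase hp)) hq).1 hpq)
  rw [← add_sum_erase _ _ hqP] at hqsum
  exact Nat.not_dvd_ordCompl hq hn ((Nat.dvd_add_left hrest).1 hqsum)

lemma IsPrimitiveRoot.pow_ordCompl {M : Type*} [CommMonoid M] {n : ℕ} {ζ : M}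
    (hζ : IsPrimitiveRoot ζ n) (hn : n ≠ 0) (p : ℕ) :
    IsPrimitiveRoot (ζ ^ ordCompl[p] n) (ordProj[p] n) :=
  hζ.pow (Nat.pos_of_ne_zero hn) (by rw [mul_comm, Nat.ordProj_mul_ordCompl_eq_self])

lemma Submodule.prod_mem_prod {R A ι : Type*} [CommSemiring R] [CommSemiring A] [Algebra R A]
    {s : Finset ι} {M : ι → Submodule R A} {x : ι → A} (h : ∀ i ∈ s, x i ∈ M i) :
    ∏ i ∈ s, x i ∈ ∏ i ∈ s, M i := by
  classical
  induction s using Finset.induction_on with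
  | empty => simp [one_le.1 le_rfl]
  | insert i s hi ih =>
    rw [prod_insert hi, prod_insert hi]
    exact mul_mem_mul (h i (mem_insert_self i s)) (ih fun j hj => h j (mem_insert_of_mem hj))

section PrimePower

variable {K : Type*} [CommRing K] {p k l : ℕ} {ω : K}

def powPowSum (ω : K) (p l k : ℕ) : K := ∑ j ∈ Ico l k, ω ^ p ^ j

lemma powPowSum_eq_pow_add (h : l < k) :
    powPowSum ω p l k = ω ^ p ^ l + powPowSum ω p (l + 1) k :=
  sum_eq_sum_Ico_succ_bot h _

lemma powPowSum_of_le (h : k ≤ l) : powPowSum ω p l k = 0 := by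
  rw [powPowSum, Ico_eq_empty_of_le h, sum_empty]

variable [IsDomain K]

lemma sum_powPowSum_pow_one_add_mul (hp : p.Prime) (hω : IsPrimitiveRoot ω (p ^ k))
    (hl : l + 1 < k) :
    ∑ t ∈ range p, powPowSum (ω ^ (1 + t * p ^ (k - (l + 1)))) p l k =
      p • powPowSum ω p (l + 1) k := by
  have hθ : IsPrimitiveRoot (ω ^ p ^ (k - 1)) p :=
    hω.pow (pow_pos hp.pos k) (by rw [← pow_succ]; congr 1; omega)
  have head (t : ℕ) : (ω ^ (1 + t * p ^ (k - (l + 1)))) ^ p ^ l =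
      ω ^ p ^ l * (ω ^ p ^ (k - 1)) ^ t := by
    rw [← pow_mul, ← pow_mul, ← pow_add, add_mul, one_mul, mul_assoc, ← pow_add,
      show k - (l + 1) + l = k - 1 by omega, mul_comm t]
  have tail (t : ℕ) :
      powPowSum (ω ^ (1 + t * p ^ (k - (l + 1)))) p (l + 1) k = powPowSum ω p (l + 1) k := by
    refine sum_congr rfl fun j hj => ?_
    have hdvd : p ^ k ∣ t * p ^ (k - (l + 1)) * p ^ j := by
      rw [mul_assoc, ← pow_add]
      exact Dvd.dvd.mul_left (pow_dvd_pow p (by grind)) t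
    rw [← pow_mul, add_mul, one_mul, pow_add, (hω.pow_eq_one_iff_dvd _).2 hdvd, mul_one]
  simp only [powPowSum_eq_pow_add (by omega : l < k), head, tail]
  rw [sum_add_distrib, ← mul_sum, hθ.geom_sum_eq_zero hp.one_lt, mul_zero, zero_add,
    sum_const, card_range]

variable [Algebra ℚ K]

variable (K) in
def powPowSumSpan (p k : ℕ) : Submodule ℚ K :=
  span ℚ ((fun ω : K => powPowSum ω p 0 k) '' {ω | IsPrimitiveRoot ω (p ^ k)})

lemma powPowSum_mem_powPowSumSpan (hp : p.Prime) (l : ℕ) :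
    ∀ {ω : K}, IsPrimitiveRoot ω (p ^ k) → powPowSum ω p l k ∈ powPowSumSpan K p k := by
  induction l with
  | zero => exact fun hω => subset_span ⟨_, hω, rfl⟩
  | succ l ih =>
    intro ω hω
    by_cases hl : l + 1 < k
    · have hsum := sum_mem fun t (_ : t ∈ range p) => ih (hω.pow_of_coprime _
        (Nat.coprime_one_add_mul_pow (e := k - (l + 1)) (by omega) t k))
      rwa [sum_powPowSum_pow_one_add_mul hp hω hl, ← Nat.cast_smul_eq_nsmul ℚ,
        smul_mem_iff _ (by exact_mod_cast hp.ne_zero)] at hsum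
    · rw [powPowSum_of_le (by omega)]
      exact zero_mem _

theorem IsPrimitiveRoot.pow_mem_powPowSumSpan (hp : p.Prime) (hω : IsPrimitiveRoot ω (p ^ k))
    (hk : k ≠ 0) (m : ℕ) : ω ^ m ∈ powPowSumSpan K p k := by
  have of_not_dvd {m : ℕ} (hm : ¬p ^ k ∣ m) : ω ^ m ∈ powPowSumSpan K p k := by
    have hm0 : m ≠ 0 := by rintro rfl; exact hm (dvd_zero _)
    obtain ⟨e, a, hpa, rfl⟩ := Nat.exists_eq_pow_mul_and_not_dvd hm0 p hp.ne_one
    have he : e < k := by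
      by_contra! hke
      exact hm (Dvd.dvd.mul_right (pow_dvd_pow p hke) a)
    have ha : IsPrimitiveRoot (ω ^ a) (p ^ k) :=
      hω.pow_of_coprime a (Nat.Coprime.pow_right _ ((hp.coprime_iff_not_dvd.2 hpa).symm))
    rw [mul_comm, pow_mul, ← add_sub_cancel_right ((ω ^ a) ^ p ^ e) (powPowSum (ω ^ a) p (e + 1) k),
      ← powPowSum_eq_pow_add he]
    exact sub_mem (powPowSum_mem_powPowSumSpan hp e ha) (powPowSum_mem_powPowSumSpan hp _ ha)
  by_cases hm : p ^ k ∣ m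
  · have hgeom := hω.geom_sum_eq_zero (Nat.one_lt_pow hk hp.one_lt)
    rw [range_eq_Ico, sum_eq_sum_Ico_succ_bot (pow_pos hp.pos k), pow_zero] at hgeom
    rw [(hω.pow_eq_one_iff_dvd m).2 hm, eq_neg_of_add_eq_zero_left hgeom]
    refine neg_mem (sum_mem fun i hi => of_not_dvd (Nat.not_dvd_of_pos_of_lt ?_ ?_)) <;> grind
  · exact of_not_dvd hm

end PrimePower

section Cyclotomic

variable {K : Type*} [CommRing K] [IsDomain K] {n : ℕ} {ζ : K}

lemma IsPrimitiveRoot.exists_coprime_forall_pow_ordCompl_pow_eq (hζ : IsPrimitiveRoot ζ n)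
    (hn : n ≠ 0) {ω : ℕ → K} (hω : ∀ p ∈ n.primeFactors, IsPrimitiveRoot (ω p) (ordProj[p] n)) :
    ∃ b, b.Coprime n ∧ ∀ p ∈ n.primeFactors, (ζ ^ ordCompl[p] n) ^ b = ω p := by
  have (p : ℕ) : ∃ a, p ∈ n.primeFactors → a.Coprime p ∧ (ζ ^ ordCompl[p] n) ^ a = ω p := by
    by_cases hp : p ∈ n.primeFactors
    · have : NeZero (ordProj[p] n) := ⟨(Nat.ordProj_pos n p).ne'⟩
      obtain ⟨a, -, ha, hpow⟩ := ((hζ.pow_ordCompl hn p).isPrimitiveRoot_iff).1 (hω p hp)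
      exact ⟨a, fun _ => ⟨ha.coprime_dvd_right (dvd_pow_self p (Finsupp.mem_support_iff.1 hp)),
        hpow⟩⟩
    · exact ⟨0, fun h => absurd h hp⟩
  choose a ha using this
  obtain ⟨b, hb⟩ := Nat.chineseRemainderOfFinset a (fun p => ordProj[p] n) n.primeFactors
    (fun p _ => (Nat.ordProj_pos n p).ne') (Nat.pairwise_coprime_ordProj n)
  refine ⟨b, Nat.coprime_of_dvd fun q hq hqb hqn => ?_, fun p hp => ?_⟩
  · have hqP : q ∈ n.primeFactors := Nat.mem_primeFactors.2 ⟨hq, hqn, hn⟩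
    have hbq : b ≡ a q [MOD q] :=
      (hb q hqP).of_dvd (dvd_pow_self q (Finsupp.mem_support_iff.1 hqP))
    exact (Nat.Prime.coprime_iff_not_dvd hq).1 (ha q hqP).1.symm ((hbq.dvd_iff dvd_rfl).1 hqb)
  · rw [← (ha p hp).2]
    exact pow_eq_pow_of_modEq (hb p hp) (hζ.pow_ordCompl hn p).pow_eq_one

theorem IsPrimitiveRoot.pow_mem_prod_powPowSumSpan [Algebra ℚ K] (hζ : IsPrimitiveRoot ζ n)
    (hn : n ≠ 0) (i : ℕ) :
    ζ ^ i ∈ ∏ p ∈ n.primeFactors, powPowSumSpan K p (n.factorization p) := by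
  have : NeZero n := ⟨hn⟩
  obtain ⟨c, -, hc⟩ := (hζ.pow_of_coprime _ (Nat.coprime_sum_ordCompl hn)).eq_pow_of_pow_eq_one
    hζ.pow_eq_one
  rw [← hc, ← prod_pow_eq_pow_sum, ← prod_pow, ← prod_pow]
  refine Submodule.prod_mem_prod fun p hp => ?_
  rw [← pow_mul]
  exact (hζ.pow_ordCompl hn p).pow_mem_powPowSumSpan (Nat.prime_of_mem_primeFactors hp)
    (Finsupp.mem_support_iff.1 hp) _

end Cyclotomic

section Galois

variable {K : Type*} [Field K] [Algebra ℚ K] [Normal ℚ K] {n : ℕ} {ζ : K}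

lemma IsPrimitiveRoot.exists_algEquiv_apply_eq (hζ : IsPrimitiveRoot ζ n) {μ : K}
    (hμ : IsPrimitiveRoot μ n) (hn : n ≠ 0) : ∃ σ : K ≃ₐ[ℚ] K, σ ζ = μ := by
  have : NeZero n := ⟨hn⟩
  refine minpoly.exists_algEquiv_of_root (Algebra.IsAlgebraic.isAlgebraic μ) ?_
  rw [← hμ.minpoly_eq_cyclotomic_of_irreducible
      (Polynomial.cyclotomic.irreducible_rat (Nat.pos_of_ne_zero hn)), Polynomial.aeval_def,
    Polynomial.eval₂_eq_eval_map, Polynomial.map_cyclotomic]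
  exact hζ.isRoot_cyclotomic (Nat.pos_of_ne_zero hn)

lemma IsPrimitiveRoot.prod_powPowSumSpan_le_span_algEquiv (hζ : IsPrimitiveRoot ζ n)
    (hn : n ≠ 0) :
    ∏ p ∈ n.primeFactors, powPowSumSpan K p (n.factorization p) ≤
      span ℚ (Set.range fun σ : K ≃ₐ[ℚ] K =>
        σ (∏ p ∈ n.primeFactors, powPowSum (ζ ^ ordCompl[p] n) p 0 (n.factorization p))) := by
  simp only [powPowSumSpan, prod_span, span_le]
  intro x hx
  obtain ⟨g, hg, rfl⟩ := (Set.mem_finsetProd _ _ _).1 hx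
  have (p : ℕ) : ∃ ω : K, p ∈ n.primeFactors →
      IsPrimitiveRoot ω (ordProj[p] n) ∧ powPowSum ω p 0 (n.factorization p) = g p := by
    by_cases hp : p ∈ n.primeFactors
    · obtain ⟨ω, hω, hωg⟩ := hg hp
      exact ⟨ω, fun _ => ⟨hω, hωg⟩⟩
    · exact ⟨0, fun h => absurd h hp⟩
  choose ω hω using this
  obtain ⟨b, hb, hbω⟩ := hζ.exists_coprime_forall_pow_ordCompl_pow_eq hn fun p hp => (hω p hp).1
  obtain ⟨σ, hσ⟩ := hζ.exists_algEquiv_apply_eq (hζ.pow_of_coprime b hb) hn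
  refine subset_span ⟨σ, (map_prod σ _ _).trans (prod_congr rfl fun p hp => ?_)⟩
  rw [← (hω p hp).2, ← hbω p hp, powPowSum, powPowSum, map_sum]
  simp only [map_pow, hσ, pow_right_comm]

end Galois

lemma isNormalBasisGenerator_of_top_le_span {K : Type*} [Field K] [Algebra ℚ K]
    [FiniteDimensional ℚ K] [IsGalois ℚ K] {x : K}
    (h : ⊤ ≤ span ℚ (Set.range fun σ : K ≃ₐ[ℚ] K => σ x)) : IsNormalBasisGenerator K x := by
  have hcard : Fintype.card (K ≃ₐ[ℚ] K) = Module.finrank ℚ K := by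
    rw [← Nat.card_eq_fintype_card, IsGalois.card_aut_eq_finrank]
  exact ⟨basisOfTopLeSpanOfCardEqFinrank _ h hcard,
    fun σ => congrFun (coe_basisOfTopLeSpanOfCardEqFinrank _ h hcard) σ⟩

theorem stmt_12 (n : ℕ+) (ζ : CyclotomicField n ℚ) (hζ : IsPrimitiveRoot ζ (n : ℕ)) :
    IsNormalBasisGenerator (CyclotomicField n ℚ)
      (∏ p ∈ (n : ℕ).primeFactors,
        ∑ j ∈ Finset.range ((n : ℕ).factorization p),
          ζ ^ (((n : ℕ) / p ^ ((n : ℕ).factorization p)) * p ^ j)) := by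
  have : NeZero (n : ℕ) := ⟨n.ne_zero⟩
  have : IsCyclotomicExtension {(n : ℕ)} ℚ (CyclotomicField n ℚ) :=
    CyclotomicField.isCyclotomicExtension (n : ℕ) ℚ
  have := IsCyclotomicExtension.isGalois {(n : ℕ)} ℚ (CyclotomicField n ℚ)
  have hη : ∏ p ∈ (n : ℕ).primeFactors, ∑ j ∈ range ((n : ℕ).factorization p),
      ζ ^ (((n : ℕ) / p ^ ((n : ℕ).factorization p)) * p ^ j) =
      ∏ p ∈ (n : ℕ).primeFactors,
        powPowSum (ζ ^ ordCompl[p] (n : ℕ)) p 0 ((n : ℕ).factorization p) := by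
    simp only [powPowSum, range_eq_Ico, pow_mul]
  rw [hη]
  refine isNormalBasisGenerator_of_top_le_span ?_
  rw [← (hζ.powerBasis ℚ).basis.span_eq, span_le]
  rintro _ ⟨i, rfl⟩
  rw [(hζ.powerBasis ℚ).coe_basis, hζ.powerBasis_gen ℚ]
  exact hζ.prod_powPowSumSpan_le_span_algEquiv n.ne_zero
    (hζ.pow_mem_prod_powPowSumSpan n.ne_zero i)
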